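/- Let R be a ring. With A an m×n matrix, L₁,…,L_d as above (L_i of shape n_{i−1}×n_i, n₀ = n), H of shape m×n_d, S_i of shape m×n_{i−1}, define A' = H(L₁⋯L_d)ᵀ + Σ_{i=0}^{d−1} S_{i+1}(L₁⋯L_i)ᵀ. Similarly with G of shape n_d×l, T_i of shape n_{i−1}×l, define B' = (L₁⋯L_d)G + Σ_{i=0}^{d−1}(L₁⋯L_i)T_{i+1}. Then (A+A')(B+B') − [ (A L₁⋯L_d) G + Σ_{i=0}^{d−1} (A L₁⋯L_i) T_{i+1} ] − [ H (L₁⋯L_d)ᵀ(B+B') + Σ_{i=0}^{d−1} S_{i+1} (L₁⋯L_i)ᵀ(B+B') ] = A B. -/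
import Mathlib

open Matrix

/-- Prefix products `L₁ L₂ ⋯ L_i` (here `L i` is `L_{i+1}`, of shape
`n_i × n_{i+1}`); the empty product is the identity. -/
def prefixProd {R : Type*} [Ring R] (n : ℕ → ℕ)
    (L : (i : ℕ) → Matrix (Fin (n i)) (Fin (n (i + 1))) R) :
    (i : ℕ) → Matrix (Fin (n 0)) (Fin (n i)) R
  | 0 => 1
  | i + 1 => prefixProd n L i * L i

/-- Exact correctness of the improved delegated matrix-matrices protocol:
with `A' = H(L₁⋯L_d)ᵀ + Σ_{i=0}^{d−1} S_{i+1}(L₁⋯L_i)ᵀ` and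
`B' = (L₁⋯L_d)G + Σ_{i=0}^{d−1}(L₁⋯L_i)T_{i+1}`, the client output
`(A+A')(B+B') − [(A L₁⋯L_d)G + Σ (A L₁⋯L_i)T_{i+1}]
  − [H (L₁⋯L_d)ᵀ(B+B') + Σ S_{i+1} (L₁⋯L_i)ᵀ(B+B')]` equals `A B`. -/
theorem stmt_6 {R : Type*} [Ring R] (m l d : ℕ) (n : ℕ → ℕ)
    (L : (i : ℕ) → Matrix (Fin (n i)) (Fin (n (i + 1))) R)
    (A : Matrix (Fin m) (Fin (n 0)) R)
    (H : Matrix (Fin m) (Fin (n d)) R)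
    (S : (i : ℕ) → Matrix (Fin m) (Fin (n i)) R)
    (G : Matrix (Fin (n d)) (Fin l) R)
    (T : (i : ℕ) → Matrix (Fin (n i)) (Fin l) R)
    (B : Matrix (Fin (n 0)) (Fin l) R)
    (A' : Matrix (Fin m) (Fin (n 0)) R)
    (hA' : A' = H * (prefixProd n L d)ᵀ
        + ∑ i ∈ Finset.range d, S i * (prefixProd n L i)ᵀ)
    (B' : Matrix (Fin (n 0)) (Fin l) R)
    (hB' : B' = prefixProd n L d * G
        + ∑ i ∈ Finset.range d, prefixProd n L i * T i) :
    (A + A') * (B + B')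
      - ((A * prefixProd n L d) * G
          + ∑ i ∈ Finset.range d, (A * prefixProd n L i) * T i)
      - (H * ((prefixProd n L d)ᵀ * (B + B'))
          + ∑ i ∈ Finset.range d, S i * ((prefixProd n L i)ᵀ * (B + B')))
      = A * B := by
  have h1 : (A * prefixProd n L d) * G
      + ∑ i ∈ Finset.range d, (A * prefixProd n L i) * T i = A * B' := by
    rw [hB', Matrix.mul_add, Matrix.mul_sum]
    simp [Matrix.mul_assoc]
  have h2 : H * ((prefixProd n L d)ᵀ * (B + B'))
      + ∑ i ∈ Finset.range d, S i * ((prefixProd n L i)ᵀ * (B + B'))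
      = A' * (B + B') := by
    rw [hA', Matrix.add_mul, Matrix.sum_mul]
    simp [Matrix.mul_assoc]
  rw [h1, h2, Matrix.add_mul, Matrix.mul_add, Matrix.mul_add]
  abel
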